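/- arXiv:math/0604133 — 3 statements merged into one kernel-verified Lean document; each statement's English description precedes it below -/
import Mathlib

section
/- The set 𝒟_n is closed under addition: for all D, D' ∈ 𝒟_n, the set D + D' again belongs to 𝒟_n; that is, D + D' is finite and whenever d ∈ D + D' and d_i ≠ 0, then d − e_i ∈ D + D'. -/
/-- `D ∈ 𝒟ₙ`: a finite set `D ⊆ ℕ₀ⁿ` (given as a `Finset`) such that whenever `d ∈ D`
and `dᵢ ≠ 0`, then `d − eᵢ ∈ D`. -/
def IsDset {n : ℕ} (D : Finset (Fin n → ℕ)) : Prop :=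
  ∀ d ∈ D, ∀ i : Fin n, d i ≠ 0 → d - Pi.single i 1 ∈ D

/-- `#(p̂⁻¹(dh) ∩ D)`: the number of elements of `D` in the fiber over `dh` of the
projection `p̂` forgetting the first coordinate. -/
def fiberCard {n : ℕ} (D : Finset (Fin (n + 1) → ℕ)) (dh : Fin n → ℕ) : ℕ :=
  (D.filter (fun d => Fin.tail d = dh)).card

/-- The addition `D + D'` on `𝒟ₙ`: the set of all `d ∈ ℕ₀ⁿ` such that
`p̂(d) ∈ p̂(D) ∪ p̂(D')` and `d₁ < #(p̂⁻¹(p̂ d) ∩ D) + #(p̂⁻¹(p̂ d) ∩ D')`,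
realized as a `Finset`: for each `dh ∈ p̂(D) ∪ p̂(D')` it collects the tuples with tail
`dh` and first coordinate `< fiberCard D dh + fiberCard D' dh`; so `d ∈ addD D D'` iff
`Fin.tail d ∈ p̂(D) ∪ p̂(D')` and `d 0 < fiberCard D (Fin.tail d) + fiberCard D' (Fin.tail d)`. -/
def addD {n : ℕ} (D D' : Finset (Fin (n + 1) → ℕ)) : Finset (Fin (n + 1) → ℕ) :=
  (D.image (fun d => Fin.tail d) ∪ D'.image (fun d => Fin.tail d)).biUnion
    (fun dh => (Finset.range (fiberCard D dh + fiberCard D' dh)).image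
      (fun j => Fin.cons j dh))

/-
Decrementing a tail coordinate never shrinks a fiber: `d ↦ d - e_{j+1}` injects the fiber of a
set in `𝒟ₙ` over `dh` into its fiber over `dh - e_j`. Membership in `D + D'` only asks the first
coordinate to lie below the total fiber size over the tail, so it survives decrementing the first
coordinate (same fiber) and decrementing a tail coordinate (a fiber at least as large).
-/

namespace Fin

variable {n : ℕ} {α : Type*}

lemma tail_sub [Sub α] (f g : Fin (n + 1) → α) : tail (f - g) = tail f - tail g := rfl

lemma tail_pi_single_zero [Zero α] (x : α) : tail (Pi.single 0 x : Fin (n + 1) → α) = 0 := by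
  simp only [Pi.single, tail_update_zero]
  rfl

lemma tail_pi_single_succ [Zero α] (i : Fin n) (x : α) :
    tail (Pi.single i.succ x : Fin (n + 1) → α) = Pi.single i x := by
  simp only [Pi.single, tail_update_succ]
  rfl

end Fin

lemma pi_single_one_le {ι : Type*} [DecidableEq ι] {d : ι → ℕ} {i : ι} (hi : d i ≠ 0) :
    Pi.single i 1 ≤ d := by
  intro k
  rcases eq_or_ne k i with rfl | hk
  · simpa [Nat.one_le_iff_ne_zero] using hi
  · simp [Pi.single_eq_of_ne hk]

section addD

variable {n : ℕ}

lemma fiberCard_pos_iff (D : Finset (Fin (n + 1) → ℕ)) (dh : Fin n → ℕ) :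
    0 < fiberCard D dh ↔ dh ∈ D.image Fin.tail := by
  simp [fiberCard, Finset.card_pos, Finset.filter_nonempty_iff]

lemma mem_addD {D D' : Finset (Fin (n + 1) → ℕ)} {d : Fin (n + 1) → ℕ} :
    d ∈ addD D D' ↔ d 0 < fiberCard D (Fin.tail d) + fiberCard D' (Fin.tail d) := by
  simp only [addD, Finset.mem_biUnion, Finset.mem_union]
  constructor
  · rintro ⟨dh, -, hd⟩
    obtain ⟨j, hj, rfl⟩ := Finset.mem_image.mp hd
    simpa using hj
  · intro h
    refine ⟨Fin.tail d, ?_, Finset.mem_image.mpr ⟨d 0, Finset.mem_range.mpr h, Fin.cons_self_tail d⟩⟩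
    rw [← fiberCard_pos_iff, ← fiberCard_pos_iff]
    omega

lemma IsDset.fiberCard_le_fiberCard_sub_single {D : Finset (Fin (n + 1) → ℕ)} (hD : IsDset D)
    {dh : Fin n → ℕ} {j : Fin n} (hj : dh j ≠ 0) :
    fiberCard D dh ≤ fiberCard D (dh - Pi.single j 1) := by
  have single_le {d : Fin (n + 1) → ℕ} (hd : Fin.tail d = dh) : Pi.single j.succ 1 ≤ d :=
    pi_single_one_le (by rwa [← congrFun hd j] at hj)
  refine Finset.card_le_card_of_injOn (· - Pi.single j.succ 1) ?_ ?_
  · intro d hd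
    simp only [Finset.coe_filter, Set.mem_ofPred_eq] at hd ⊢
    obtain ⟨hdD, rfl⟩ := hd
    exact ⟨hD d hdD j.succ hj, by rw [Fin.tail_sub, Fin.tail_pi_single_succ]⟩
  · intro a ha b hb hab
    simp only [Finset.coe_filter, Set.mem_ofPred_eq] at ha hb
    exact (tsub_left_inj (single_le ha.2) (single_le hb.2)).mp hab

end addD

/-- Proposition (c): `𝒟ₙ` is closed under addition: for `D, D' ∈ 𝒟ₙ`, the (automatically
finite) set `D + D'` again lies in `𝒟ₙ`, i.e. whenever `d ∈ D + D'` and `dᵢ ≠ 0`, then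
`d − eᵢ ∈ D + D'`. -/
theorem stmt_8 {n : ℕ} (D D' : Finset (Fin (n + 1) → ℕ))
    (hD : IsDset D) (hD' : IsDset D') :
    IsDset (addD D D') := by
  intro d hd i hi
  rw [mem_addD] at hd ⊢
  rw [Fin.tail_sub]
  rcases Fin.eq_zero_or_eq_succ i with rfl | ⟨j, rfl⟩
  · rw [Fin.tail_pi_single_zero, tsub_zero]
    simp only [Pi.sub_apply, Pi.single_eq_same]
    omega
  · have hj : Fin.tail d j ≠ 0 := hi
    rw [Fin.tail_pi_single_succ, Pi.sub_apply, Pi.single_eq_of_ne (Fin.succ_ne_zero j).symm,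
      Nat.sub_zero]
    have hfiber := hD.fiberCard_le_fiberCard_sub_single hj
    have hfiber' := hD'.fiberCard_le_fiberCard_sub_single hj
    omega
end

section
/- Let k be a field and A a finite set of points of k^n. Then for every β ∈ ℕ₀^n − D(A) there exists a unique polynomial f_β ∈ k[X_1,…,X_n] such that: (i) the leading term of f_β in the lexicographic ordering (with X_1 < X_2 < … < X_n) is X^β; (ii) the exponents of all lower terms of f_β lie in D(A); and (iii) f_β(a) = 0 for all a ∈ A. -/
variable {k : Type*} [Field k] [DecidableEq k]

/-- The set `D(A) ⊆ ℕ₀ⁿ` attached to a finite set of points `A ⊆ kⁿ`, defined by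
induction on `n`.  For `n = 0`, `D(A)` is empty if `A` is and the single point of `ℕ₀⁰`
otherwise (so that for `n = 1` one gets `D(A) = {0, 1, …, #A − 1}`).  For `n + 1`:
writing `p(A)` for the set of first coordinates of `A` and
`H a₁ = p⁻¹(a₁) ∩ A ⊆ kⁿ` (via the projection `Fin.tail` forgetting the first
coordinate), `D(A) = Σ_{a₁ ∈ p(A)} D(H a₁)`, the sum with respect to the addition `+`
on `𝒟`; spelled out via the closed formula for such sums, `d ∈ D(A)` iff
`Fin.tail d ∈ ⋃_{a₁ ∈ p(A)} D(H a₁)` and `d 0 < #{a₁ ∈ p(A) : Fin.tail d ∈ D(H a₁)}`. -/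
def DofA : (n : ℕ) → Finset (Fin n → k) → Finset (Fin n → ℕ)
  | 0, A => A.image (fun _ => (fun _ => 0))
  | (n + 1), A =>
      ((A.image (fun a => a 0)).biUnion
          (fun a1 => DofA n ((A.filter (fun a => a 0 = a1)).image (fun a => Fin.tail a)))).biUnion
        (fun dh =>
          (Finset.range
              (((A.image (fun a => a 0)).filter
                  (fun a1 =>
                    dh ∈ DofA n ((A.filter (fun a => a 0 = a1)).image (fun a => Fin.tail a)))).card)).image
            (fun j => Fin.cons j dh))


/-- The strict lexicographic order on exponent vectors corresponding to the
lexicographic monomial ordering with `X₁ < X₂ < … < Xₙ`: the exponents of the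
variables with *larger* index are compared first. -/
def lexLt {n : ℕ} (α β : Fin n → ℕ) : Prop :=
  ∃ i : Fin n, α i < β i ∧ ∀ j : Fin n, i < j → α j = β j

/-- The (non-strict) lexicographic order corresponding to `X₁ < X₂ < … < Xₙ`. -/
def lexLe {n : ℕ} (α β : Fin n → ℕ) : Prop :=
  lexLt α β ∨ α = β

/-- Membership in the limiting set `E(D)`: `β ∉ D` and whenever `βᵢ ≠ 0`,
then `β − eᵢ ∈ D`. -/
def inE {n : ℕ} (D : Finset (Fin n → ℕ)) (β : Fin n → ℕ) : Prop :=
  β ∉ D ∧ ∀ i : Fin n, β i ≠ 0 → β - Pi.single i 1 ∈ D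

/-- The coefficient of the monomial `X^α` in the multivariate polynomial `f`,
with the exponent given as a function `Fin n → ℕ`. -/
noncomputable def coeffv {n : ℕ} {R : Type*} [CommSemiring R]
    (f : MvPolynomial (Fin n) R) (α : Fin n → ℕ) : R :=
  MvPolynomial.coeff (Finsupp.equivFunOnFinite.symm α) f


/-!
Order monomials colexicographically, i.e. by `lexLt`: the last variable is compared first.
The heart of the matter is that the leading exponent `δ` of a nonzero polynomial `f` vanishing
on `A` never lies in `D(A)`. Split off the first variable and write `δ = (δ₁, δ')`. The
coefficients of `X'^δ'` in `f` form a polynomial `q(X₁)` of degree `δ₁` (its top coefficient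
is the leading coefficient of `f`). For every `a₁` with `δ' ∈ D(H(a₁))`, the restriction
`f(a₁, ·)` vanishes on `H(a₁)` and, if `q(a₁) ≠ 0`, has leading exponent `δ'`; by induction
this is impossible, so `q` vanishes at all these `a₁`, and there are more than `δ₁` of them
exactly when `δ ∈ D(A)`.

Conversely every `γ ∉ D(A)` is the leading exponent of a monic polynomial vanishing on `A`:
`X₁^(γ₁ - #S) ∏_{s ∈ S} (X₁ - s)` kills the fibres over `S = {a₁ | γ' ∈ D(H(a₁))}`, and it is
multiplied by a Lagrange interpolation in `X₁` of the polynomials that induction provides on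
the other fibres. Division by all these polynomials reduces `X^β` modulo the vanishing ideal
to a remainder supported in `D(A)`, and `X^β` minus that remainder is `f_β`. Two candidates
differ by a polynomial vanishing on `A` and supported in `D(A)`, hence by zero.
-/

open MvPolynomial MonomialOrder Finset

/-- Exponents are compared at the *largest* variable first, unlike `MonomialOrder.lex`. -/
noncomputable def MonomialOrder.colex {σ : Type*} [LinearOrder σ] [WellFoundedLT σ] :
    MonomialOrder σ where
  syn := Colex (σ →₀ ℕ)
  toSyn := { toEquiv := toColex, map_add' := fun _ _ => rfl }
  toSyn_monotone := Finsupp.toColex_monotone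

namespace MonomialOrder

theorem colex_lt_iff {σ : Type*} [LinearOrder σ] [WellFoundedLT σ] {c d : σ →₀ ℕ} :
    c ≺[colex] d ↔ ∃ i, (∀ j, i < j → c j = d j) ∧ c i < d i :=
  Finsupp.Colex.lt_iff

theorem colex_cons_lt_cons_iff {n i j : ℕ} {c d : Fin n →₀ ℕ} :
    Finsupp.cons i c ≺[colex] Finsupp.cons j d ↔ c ≺[colex] d ∨ c = d ∧ i < j := by
  simp only [colex_lt_iff]
  constructor
  · rintro ⟨l, heq, hlt⟩
    induction l using Fin.cases with
    | zero =>
      exact Or.inr ⟨Finsupp.ext fun l => by simpa using heq l.succ (Fin.succ_pos l),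
        by simpa using hlt⟩
    | succ l =>
      exact Or.inl ⟨l, fun l' hl' => by simpa using heq l'.succ (Fin.succ_lt_succ_iff.2 hl'),
        by simpa using hlt⟩
  · rintro (⟨l, heq, hlt⟩ | ⟨rfl, hij⟩)
    · refine ⟨l.succ, fun l' hl' => ?_, by simpa using hlt⟩
      induction l' using Fin.cases with
      | zero => exact absurd hl' (Fin.succ_pos l).not_gt
      | succ l' => simpa using heq l' (Fin.succ_lt_succ_iff.1 hl')
    · refine ⟨0, fun l' hl' => ?_, by simpa using hij⟩
      induction l' using Fin.cases with
      | zero => exact absurd hl' (lt_irrefl 0)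
      | succ l' => simp

variable {σ R : Type*} {m : MonomialOrder σ}

theorem degree_eq_of_forall_le [CommSemiring R] {f : MvPolynomial σ R} {d : σ →₀ ℕ}
    (hd : d ∈ f.support) (h : ∀ c ∈ f.support, c ≼[m] d) : m.degree f = d :=
  m.toSyn.injective (le_antisymm (m.degree_le_iff.2 h) (m.le_degree hd))

theorem Monic.support_sub_monomial_lt [CommRing R] {f : MvPolynomial σ R} (hf : m.Monic f) :
    ∀ c ∈ (f - monomial (m.degree f) 1).support, c ≺[m] m.degree f := by
  classical
  intro c hc
  rw [mem_support_iff, coeff_sub, coeff_monomial] at hc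
  split_ifs at hc with h
  · exact absurd (by rw [← h, hf.coeff_degree, sub_self]) hc
  · rw [sub_zero, ← mem_support_iff] at hc
    exact lt_of_le_of_ne (m.le_degree hc) fun e => h (m.toSyn.injective e).symm

theorem monic_X_pow_mul_prod_X_sub_C [CommRing R] [IsDomain R] (i : σ) (e : ℕ) (S : Finset R) :
    m.Monic (X i ^ e * ∏ s ∈ S, (X i - C s)) ∧
      m.degree (X i ^ e * ∏ s ∈ S, (X i - C s)) = Finsupp.single i (e + #S) := by
  have hX : m.Monic (X i ^ e : MvPolynomial σ R) := monic_X.pow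
  have hP : m.Monic (∏ s ∈ S, (X i - C s)) := Monic.prod fun s _ => m.monic_X_sub_C i s
  refine ⟨hX.mul hP, ?_⟩
  rw [degree_mul hX.ne_zero hP.ne_zero, degree_pow, degree_X,
    degree_prod fun s _ => (m.monic_X_sub_C i s).ne_zero]
  simp [m.degree_X_sub_C, Finsupp.smul_single]

end MonomialOrder

section EvalFirst

variable {n : ℕ} {R : Type*} [CommSemiring R]

noncomputable def evalFirst (f : MvPolynomial (Fin (n + 1)) R) (y : R) : MvPolynomial (Fin n) R :=
  Polynomial.eval (C y) (finSuccEquiv R n f)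

theorem eval_evalFirst (f : MvPolynomial (Fin (n + 1)) R) (y : R) (t : Fin n → R) :
    eval t (evalFirst f y) = eval (Fin.cons y t) f := by
  rw [eval_eq_eval_mv_eval', Polynomial.eval_map, evalFirst, ← Polynomial.eval₂_at_apply, eval_C]

/-- The coefficient of the monomial `c` in the variables after the first, as a polynomial in the
first variable. -/
noncomputable def coeffPoly (c : Fin n →₀ ℕ) (f : MvPolynomial (Fin (n + 1)) R) :
    Polynomial R :=
  ∑ j ∈ (finSuccEquiv R n f).support, Polynomial.monomial j (coeff (Finsupp.cons j c) f)

theorem coeff_coeffPoly (c : Fin n →₀ ℕ) (f : MvPolynomial (Fin (n + 1)) R) (j : ℕ) :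
    (coeffPoly c f).coeff j = coeff (Finsupp.cons j c) f := by
  rw [coeffPoly, Polynomial.finsetSum_coeff]
  simp_rw [Polynomial.coeff_monomial]
  rw [Finset.sum_ite_eq', ite_eq_left_iff]
  intro hj
  rw [← finSuccEquiv_coeff_coeff, Polynomial.notMem_support_iff.1 hj, coeff_zero]

theorem eval_coeffPoly (c : Fin n →₀ ℕ) (f : MvPolynomial (Fin (n + 1)) R) (y : R) :
    (coeffPoly c f).eval y = coeff c (evalFirst f y) := by
  rw [coeffPoly, Polynomial.eval_finsetSum, evalFirst, Polynomial.eval_eq_sum, Polynomial.sum_def,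
    coeff_sum]
  refine Finset.sum_congr rfl fun j _ => ?_
  rw [Polynomial.eval_monomial, ← C_pow, mul_comm (Polynomial.coeff _ j), coeff_C_mul,
    finSuccEquiv_coeff_coeff, mul_comm]

theorem support_evalFirst_colex_le (f : MvPolynomial (Fin (n + 1)) R) (y : R) :
    ∀ c ∈ (evalFirst f y).support, c ≼[colex] Finsupp.tail (colex.degree f) := by
  intro c hc
  rw [mem_support_iff, ← eval_coeffPoly] at hc
  obtain ⟨j, hj⟩ : ∃ j, (coeffPoly c f).coeff j ≠ 0 := by
    by_contra! h
    exact hc (by rw [show coeffPoly c f = 0 from Polynomial.ext h, Polynomial.eval_zero])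
  rw [coeff_coeffPoly, ← mem_support_iff] at hj
  refine not_lt.1 fun hlt => (colex.le_degree hj).not_gt ?_
  rw [← Finsupp.cons_tail (colex.degree f)]
  exact colex_cons_lt_cons_iff.2 (Or.inl hlt)

end EvalFirst

section Interpolation

variable {n : ℕ}

/-- Lagrange interpolation of the `g y` in the first variable, written relative to `M` so that
only the differences `g y - M` get multiplied by powers of the first variable. -/
noncomputable def interpolateFirst (T : Finset k) (M : MvPolynomial (Fin n) k)
    (g : k → MvPolynomial (Fin n) k) : MvPolynomial (Fin (n + 1)) k :=
  (finSuccEquiv k n).symm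
    (Polynomial.C M + ∑ y ∈ T, (Lagrange.basis T id y).map C * Polynomial.C (g y - M))

theorem evalFirst_interpolateFirst (T : Finset k) (M : MvPolynomial (Fin n) k)
    (g : k → MvPolynomial (Fin n) k) {y : k} (hy : y ∈ T) :
    evalFirst (interpolateFirst T M g) y = g y := by
  rw [evalFirst, interpolateFirst, AlgEquiv.apply_symm_apply, Polynomial.eval_add,
    Polynomial.eval_C, Polynomial.eval_finsetSum, Finset.sum_eq_single y]
  · have h1 : (Lagrange.basis T id y).eval y = 1 := Lagrange.eval_basis_self (Set.injOn_id _) hy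
    rw [Polynomial.eval_mul, Polynomial.eval_C, Polynomial.eval_map, Polynomial.eval₂_hom, h1,
      C_1, one_mul, add_sub_cancel]
  · intro z _ hzy
    have h0 : (Lagrange.basis T id z).eval y = 0 := Lagrange.eval_basis_of_ne (v := id) hzy hy
    rw [Polynomial.eval_mul, Polynomial.eval_map, Polynomial.eval₂_hom, h0, C_0, zero_mul]
  · exact fun h => absurd hy h

theorem coeff_cons_interpolateFirst (T : Finset k) (M : MvPolynomial (Fin n) k)
    (g : k → MvPolynomial (Fin n) k) (j : ℕ) (c : Fin n →₀ ℕ) :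
    coeff (Finsupp.cons j c) (interpolateFirst T M g) = (if j = 0 then coeff c M else 0) +
      ∑ y ∈ T, (Lagrange.basis T id y).coeff j * coeff c (g y - M) := by
  rw [← finSuccEquiv_coeff_coeff, interpolateFirst, AlgEquiv.apply_symm_apply]
  simp only [Polynomial.coeff_add, Polynomial.coeff_C, Polynomial.finsetSum_coeff,
    Polynomial.coeff_mul_C, Polynomial.coeff_map, coeff_add, coeff_sum, coeff_C_mul,
    apply_ite (coeff c), coeff_zero]

theorem colex_monic_interpolateFirst (T : Finset k) (d : Fin n →₀ ℕ)
    (g : k → MvPolynomial (Fin n) k) (hg : ∀ y ∈ T, colex.Monic (g y) ∧ colex.degree (g y) = d) :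
    colex.Monic (interpolateFirst T (monomial d 1) g) ∧
      colex.degree (interpolateFirst T (monomial d 1) g) = Finsupp.cons 0 d := by
  set G := interpolateFirst T (monomial d 1) g
  have hlow : ∀ y ∈ T, ∀ c ∈ (g y - monomial d 1).support, c ≺[colex] d := fun y hy => by
    simpa only [(hg y hy).2] using (hg y hy).1.support_sub_monomial_lt
  have hcoeff : ∀ j c, ¬ c ≺[colex] d →
      coeff (Finsupp.cons j c) G = if j = 0 ∧ c = d then 1 else 0 := by
    intro j c hc
    rw [coeff_cons_interpolateFirst, Finset.sum_eq_zero fun y hy => by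
      rw [notMem_support_iff.1 fun h => hc (hlow y hy c h), mul_zero], add_zero, coeff_monomial]
    by_cases hj : j = 0 <;> by_cases hcd : d = c <;> simp [hj, hcd, eq_comm]
  have htop : coeff (Finsupp.cons 0 d) G = 1 := by
    rw [hcoeff 0 d (lt_irrefl _), if_pos ⟨rfl, rfl⟩]
  have hdeg : colex.degree G = Finsupp.cons 0 d := by
    refine degree_eq_of_forall_le (mem_support_iff.2 (by rw [htop]; exact one_ne_zero))
      fun e he => ?_
    rw [← Finsupp.cons_tail e] at he ⊢
    by_cases hlt : Finsupp.tail e ≺[colex] d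
    · exact (colex_cons_lt_cons_iff.2 (Or.inl hlt)).le
    · rw [mem_support_iff, hcoeff _ _ hlt] at he
      obtain ⟨h0, hd⟩ := (ite_ne_right_iff.1 he).1
      rw [h0, hd]
  exact ⟨by rw [Monic, leadingCoeff, hdeg, htop], hdeg⟩

end Interpolation

theorem mem_vanishingIdeal_iff_eval {σ K : Type*} [Field K] {V : Set (σ → K)}
    {p : MvPolynomial σ K} : p ∈ vanishingIdeal K V ↔ ∀ x ∈ V, eval x p = 0 :=
  Iff.rfl

section Fibers

variable {n : ℕ} {K : Type*} [DecidableEq K]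

def fiber (A : Finset (Fin (n + 1) → K)) (y : K) : Finset (Fin n → K) :=
  (A.filter fun a => a 0 = y).image Fin.tail

theorem tail_mem_fiber {A : Finset (Fin (n + 1) → K)} {a : Fin (n + 1) → K} (ha : a ∈ A) :
    Fin.tail a ∈ fiber A (a 0) :=
  mem_image_of_mem _ (mem_filter.2 ⟨ha, rfl⟩)

theorem cons_mem_of_mem_fiber {A : Finset (Fin (n + 1) → K)} {y : K} {t : Fin n → K}
    (ht : t ∈ fiber A y) : Fin.cons y t ∈ A := by
  obtain ⟨a, ha, rfl⟩ := mem_image.1 ht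
  rw [mem_filter] at ha
  rw [← ha.2, Fin.cons_self_tail]
  exact ha.1

theorem evalFirst_mem_vanishingIdeal {A : Finset (Fin (n + 1) → k)}
    {f : MvPolynomial (Fin (n + 1)) k} (hf : f ∈ vanishingIdeal k (A : Set (Fin (n + 1) → k)))
    (y : k) : evalFirst f y ∈ vanishingIdeal k (fiber A y : Set (Fin n → k)) := by
  rw [mem_vanishingIdeal_iff_eval] at hf ⊢
  intro t ht
  rw [eval_evalFirst]
  exact hf _ (mem_coe.2 (cons_mem_of_mem_fiber ht))

theorem mem_DofA_zero {A : Finset (Fin 0 → K)} {d : Fin 0 → ℕ} : d ∈ DofA 0 A ↔ A.Nonempty := by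
  simp [DofA, Finset.Nonempty, Subsingleton.elim _ d]

theorem mem_DofA_succ {A : Finset (Fin (n + 1) → K)} {d : Fin (n + 1) → ℕ} :
    d ∈ DofA (n + 1) A ↔ d 0 < #{y ∈ A.image (· 0) | Fin.tail d ∈ DofA n (fiber A y)} := by
  constructor
  · intro h
    simp only [DofA, mem_biUnion, mem_image, mem_range] at h
    obtain ⟨dh, -, j, hj, rfl⟩ := h
    simpa [fiber] using hj
  · intro h
    obtain ⟨y, hy⟩ := card_pos.1 (Nat.zero_lt_of_lt h)
    simp only [mem_filter] at hy
    simp only [DofA, mem_biUnion, mem_image, mem_range]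
    exact ⟨Fin.tail d, ⟨y, mem_image.1 hy.1, hy.2⟩, d 0, h, Fin.cons_self_tail d⟩

end Fibers

theorem colex_degree_notMem_DofA : ∀ {n : ℕ} (A : Finset (Fin n → k))
    {f : MvPolynomial (Fin n) k}, f ∈ vanishingIdeal k (A : Set (Fin n → k)) → f ≠ 0 →
    ⇑(colex.degree f) ∉ DofA n A
  | 0, A, f, hf, hf0, hmem => by
    obtain ⟨a, ha⟩ := mem_DofA_zero.1 hmem
    have h := mem_vanishingIdeal_iff_eval.1 hf a ha
    rw [eq_C_of_isEmpty f, eval_C] at h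
    exact hf0 (by rw [eq_C_of_isEmpty f, h, C_0])
  | n + 1, A, f, hf, hf0, hmem => by
    set δ := colex.degree f
    have hδ : Finsupp.cons (δ 0) (Finsupp.tail δ) = δ := Finsupp.cons_tail δ
    set q := coeffPoly (Finsupp.tail δ) f
    have hq_top : q.coeff (δ 0) ≠ 0 := by
      rw [coeff_coeffPoly, hδ]
      exact colex.coeff_degree_ne_zero_iff.2 hf0
    have hq_deg : q.natDegree ≤ δ 0 := Polynomial.natDegree_le_iff_coeff_eq_zero.2 fun j hj => by
      have h := (colex_cons_lt_cons_iff (c := Finsupp.tail δ) (d := Finsupp.tail δ)).2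
        (Or.inr ⟨rfl, hj⟩)
      rw [hδ] at h
      rw [coeff_coeffPoly]
      exact colex.coeff_eq_zero_of_lt h
    have hq_roots :
        ∀ y ∈ {y ∈ A.image (· 0) | Fin.tail ⇑δ ∈ DofA n (fiber A y)}, q.eval y = 0 := by
      intro y hy
      by_contra hne
      rw [eval_coeffPoly] at hne
      have hdeg : colex.degree (evalFirst f y) = Finsupp.tail δ :=
        degree_eq_of_forall_le (mem_support_iff.2 hne) (support_evalFirst_colex_le f y)
      exact colex_degree_notMem_DofA (fiber A y) (evalFirst_mem_vanishingIdeal hf y)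
        (ne_zero_iff.2 ⟨_, hne⟩) (by rw [hdeg]; exact (mem_filter.1 hy).2)
    rw [mem_DofA_succ] at hmem
    exact hq_top (by
      rw [Polynomial.eq_zero_of_natDegree_lt_card_of_eval_eq_zero' q _ hq_roots
        (hq_deg.trans_lt hmem), Polynomial.coeff_zero])

theorem exists_monic_mem_vanishingIdeal_colex_degree_eq : ∀ {n : ℕ} (A : Finset (Fin n → k))
    (γ : Fin n →₀ ℕ), ⇑γ ∉ DofA n A →
    ∃ f ∈ vanishingIdeal k (A : Set (Fin n → k)), colex.Monic f ∧ colex.degree f = γ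
  | 0, A, γ, hγ => by
    have hA : A = ∅ := not_nonempty_iff_eq_empty.1 (mt mem_DofA_zero.2 hγ)
    exact ⟨1, by simp [hA], colex.monic_one, Subsingleton.elim _ _⟩
  | n + 1, A, γ, hγ => by
    set S := {y ∈ A.image (· 0) | Fin.tail ⇑γ ∈ DofA n (fiber A y)}
    have hS : #S ≤ γ 0 := not_lt.1 (mt mem_DofA_succ.2 hγ)
    have hT : ∀ y ∈ A.image (· 0) \ S, ∃ g ∈ vanishingIdeal k (fiber A y : Set (Fin n → k)),
        colex.Monic g ∧ colex.degree g = Finsupp.tail γ := fun y hy =>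
      exists_monic_mem_vanishingIdeal_colex_degree_eq (fiber A y) (Finsupp.tail γ) fun h =>
        (mem_sdiff.1 hy).2 (mem_filter.2 ⟨(mem_sdiff.1 hy).1, h⟩)
    choose! g hgA hg using hT
    set G := interpolateFirst (A.image (· 0) \ S) (monomial (Finsupp.tail γ) 1) g
    obtain ⟨hGm, hGd⟩ := colex_monic_interpolateFirst _ _ g hg
    obtain ⟨hPm, hPd⟩ := colex.monic_X_pow_mul_prod_X_sub_C (0 : Fin (n + 1)) (γ 0 - #S) S
    refine ⟨_ * G, ?_, hPm.mul hGm, ?_⟩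
    · rw [mem_vanishingIdeal_iff_eval]
      intro a ha
      rw [map_mul]
      by_cases hy : a 0 ∈ S
      · simp [Finset.prod_eq_zero hy]
      · have hyT : a 0 ∈ A.image (· 0) \ S := mem_sdiff.2 ⟨mem_image_of_mem _ ha, hy⟩
        have hGa : eval a G = 0 := by
          rw [← Fin.cons_self_tail a, ← eval_evalFirst, evalFirst_interpolateFirst _ _ _ hyT]
          exact mem_vanishingIdeal_iff_eval.1 (hgA _ hyT) _ (tail_mem_fiber ha)
        rw [hGa, mul_zero]
    · rw [degree_mul hPm.ne_zero hGm.ne_zero, hPd, hGd, Nat.sub_add_cancel hS]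
      ext i
      cases i using Fin.cases <;> simp [Finsupp.tail_apply]

theorem exists_support_DofA_sub_mem_vanishingIdeal {n : ℕ} (A : Finset (Fin n → k))
    (p : MvPolynomial (Fin n) k) : ∃ r : MvPolynomial (Fin n) k,
      (∀ c ∈ r.support, ⇑c ∈ DofA n A) ∧ p - r ∈ vanishingIdeal k (A : Set (Fin n → k)) := by
  set I := vanishingIdeal k (A : Set (Fin n → k))
  obtain ⟨g, r, hp, -, hr⟩ := colex.div_set (B := {b | b ∈ I ∧ colex.Monic b})
    (fun b hb => hb.2.leadingCoeff_eq_one ▸ isUnit_one) p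
  refine ⟨r, fun c hc => by_contra fun hcD => ?_, ?_⟩
  · obtain ⟨b, hbI, hbm, hbd⟩ := exists_monic_mem_vanishingIdeal_colex_degree_eq A c hcD
    exact hr c hc b ⟨hbI, hbm⟩ hbd.le
  · rw [hp, add_sub_cancel_right, Finsupp.linearCombination_apply]
    exact Submodule.finsuppSum_mem _ _ _ _ fun b _ => I.smul_mem _ b.2.1

theorem exists_monic_colex_degree_eq_support_DofA {n : ℕ} (A : Finset (Fin n → k))
    (β : Fin n →₀ ℕ) (hβ : ⇑β ∉ DofA n A) : ∃ f ∈ vanishingIdeal k (A : Set (Fin n → k)),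
      colex.Monic f ∧ colex.degree f = β ∧ ∀ c ∈ f.support, c ≠ β → ⇑c ∈ DofA n A := by
  obtain ⟨r, hrD, hr⟩ := exists_support_DofA_sub_mem_vanishingIdeal A (monomial β 1)
  have hsupp : ∀ c ∈ (monomial β 1 - r).support, c ≠ β → ⇑c ∈ DofA n A := by
    intro c hc hcβ
    rw [mem_support_iff, coeff_sub, coeff_monomial, if_neg (Ne.symm hcβ), zero_sub, neg_ne_zero,
      ← mem_support_iff] at hc
    exact hrD c hc
  have hβ1 : coeff β (monomial β 1 - r) = 1 := by
    rw [coeff_sub, coeff_monomial, if_pos rfl, notMem_support_iff.1 (mt (hrD β) hβ), sub_zero]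
  have hf0 : monomial β 1 - r ≠ 0 := ne_zero_iff.2 ⟨β, by rw [hβ1]; exact one_ne_zero⟩
  have hdeg : colex.degree (monomial β 1 - r) = β := by
    by_contra h
    exact colex_degree_notMem_DofA A hr hf0 (hsupp _ (colex.degree_mem_support hf0) h)
  exact ⟨_, hr, by rw [Monic, leadingCoeff, hdeg, hβ1], hdeg, hsupp⟩

theorem eq_of_mem_vanishingIdeal_of_support_DofA {n : ℕ} {A : Finset (Fin n → k)}
    {β : Fin n →₀ ℕ} {f f' : MvPolynomial (Fin n) k}
    (hf : f ∈ vanishingIdeal k (A : Set (Fin n → k)))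
    (hf' : f' ∈ vanishingIdeal k (A : Set (Fin n → k))) (hβ : coeff β f = coeff β f')
    (hD : ∀ c ∈ f.support, c ≠ β → ⇑c ∈ DofA n A)
    (hD' : ∀ c ∈ f'.support, c ≠ β → ⇑c ∈ DofA n A) : f = f' := by
  rw [← sub_eq_zero]
  by_contra h
  refine colex_degree_notMem_DofA A (sub_mem hf hf') h ?_
  have hmem := colex.degree_mem_support h
  have hβ' : colex.degree (f - f') ≠ β := by
    rintro hb
    rw [hb, mem_support_iff, coeff_sub, hβ, sub_self] at hmem
    exact hmem rfl
  rcases mem_union.1 (support_sub _ f f' hmem) with hc | hc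
  · exact hD _ hc hβ'
  · exact hD' _ hc hβ'

theorem lexLt_iff_colex_lt {n : ℕ} {c d : Fin n →₀ ℕ} : lexLt ⇑c ⇑d ↔ c ≺[colex] d := by
  rw [lexLt, colex_lt_iff]
  exact exists_congr fun _ => and_comm

theorem coeffv_coe {n : ℕ} {R : Type*} [CommSemiring R] (f : MvPolynomial (Fin n) R)
    (c : Fin n →₀ ℕ) : coeffv f ⇑c = coeff c f := by
  rw [coeffv, Finsupp.equivFunOnFinite_symm_coe]

theorem forall_coeffv_ne_zero_iff {n : ℕ} {R : Type*} [CommSemiring R]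
    {f : MvPolynomial (Fin n) R} {P : (Fin n → ℕ) → Prop} :
    (∀ γ, coeffv f γ ≠ 0 → P γ) ↔ ∀ c ∈ f.support, P ⇑c :=
  ⟨fun h c hc => h c (by rwa [coeffv_coe, ← mem_support_iff]),
    fun h γ hγ => h (Finsupp.equivFunOnFinite.symm γ) (mem_support_iff.2 hγ)⟩

/-- Corollary to Theorem 1: for every `β ∈ ℕ₀ⁿ − D(A)` there is a *unique* polynomial
`f_β ∈ k[X₁,…,Xₙ]` such that (i) its lexicographic leading term is `X^β` (coefficient
`1`, all other terms lexicographically lower), (ii) the exponents of all lower terms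
lie in `D(A)`, and (iii) `f_β(a) = 0` for all `a ∈ A`. -/
theorem stmt_14 (n : ℕ) (A : Finset (Fin n → k)) (β : Fin n → ℕ)
    (hβ : β ∉ DofA n A) :
    ∃! f : MvPolynomial (Fin n) k,
      (coeffv f β = 1 ∧ ∀ γ : Fin n → ℕ, coeffv f γ ≠ 0 → γ ≠ β → lexLt γ β) ∧
      (∀ γ : Fin n → ℕ, coeffv f γ ≠ 0 → γ ≠ β → γ ∈ DofA n A) ∧
      (∀ a ∈ A, MvPolynomial.eval a f = 0) := by
  obtain ⟨b, rfl⟩ : ∃ b : Fin n →₀ ℕ, ⇑b = β := ⟨Finsupp.equivFunOnFinite.symm β, rfl⟩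
  simp only [forall_coeffv_ne_zero_iff]
  simp only [coeffv_coe, ne_eq, DFunLike.coe_fn_eq, lexLt_iff_colex_lt]
  obtain ⟨f, hfA, hfm, hfd, hfD⟩ := exists_monic_colex_degree_eq_support_DofA A b hβ
  have hfb : coeff b f = 1 := hfd ▸ hfm.coeff_degree
  refine ⟨f, ⟨⟨hfb, fun c hc hcb => ?_⟩, hfD, hfA⟩, ?_⟩
  · exact lt_of_le_of_ne (hfd ▸ colex.le_degree hc) (colex.toSyn.injective.ne hcb)
  · rintro f' ⟨⟨hf'b, -⟩, hf'D, hf'A⟩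
    exact eq_of_mem_vanishingIdeal_of_support_DofA hf'A hfA (hf'b.trans hfb.symm) hf'D hfD
end

section
/- Let k be a field and A a finite set of points of k^n, and let I(A) = {f ∈ k[X_1,…,X_n] : f(a) = 0 for all a ∈ A} be its vanishing ideal. Then an exponent β ∈ ℕ₀^n occurs as the lexicographic leading exponent (with X_1 < X_2 < … < X_n) of some nonzero element of I(A) if and only if β ∉ D(A). Equivalently, D(A) is exactly the set of exponents that are not leading exponents of elements of I(A). -/
variable {k : Type*} [Field k] [DecidableEq k]

/-!
Induct on `n`, splitting off the smallest variable `X₁`. Write `f = ∑ₘ qₘ(X₁) X'ᵐ` with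
`X' = (X₂, …, Xₙ)`: the lexicographic leading exponent of `f` is `(b, t)` exactly when `q_t` has
degree `b` and `qₘ ≠ 0` forces `m < t`.

If such an `f` vanishes on `A`, then for every first coordinate `c` with `t ∈ D(H(c))` the
specialization `f(c, ·)` vanishes on `H(c)` and so, by induction, cannot have leading exponent
`t`; hence its coefficient at `X'ᵗ`, which is `q_t(c)`, is zero. By definition `(b, t) ∈ D(A)` means that there are more than `b` such `c`,
which is too many roots for `q_t`.

Conversely, if there are at most `b` such `c`, induction gives for each remaining first
coordinate `c` a polynomial `g_c` vanishing on `H(c)` with leading exponent `t`. Interpolating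
the `g_c` by Lagrange polynomials in `X₁` and multiplying by a monic polynomial of degree `b`
in `X₁` that vanishes at the excluded first coordinates gives the required `f`.
-/

open MvPolynomial
open scoped Polynomial Finset

section LeadingExponent

variable {R : Type*} [CommSemiring R] {n : ℕ}

def IsLexLeadingExp (f : MvPolynomial (Fin n) R) (β : Fin n → ℕ) : Prop :=
  coeffv f β ≠ 0 ∧ ∀ γ, coeffv f γ ≠ 0 → γ ≠ β → lexLt γ β

theorem lexLt_irrefl (α : Fin n → ℕ) : ¬ lexLt α α := fun ⟨_, h, _⟩ => lt_irrefl _ h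

theorem lexLt_cons_iff {i j : ℕ} {m t : Fin n → ℕ} :
    lexLt (Fin.cons i m) (Fin.cons j t) ↔ lexLt m t ∨ m = t ∧ i < j := by
  constructor
  · rintro ⟨l, hlt, heq⟩
    induction l using Fin.cases with
    | zero =>
      exact .inr ⟨funext fun l => by simpa using heq l.succ (Fin.succ_pos l), by simpa using hlt⟩
    | succ l =>
      exact .inl ⟨l, by simpa using hlt, fun l' hl' => by
        simpa using heq l'.succ (Fin.succ_lt_succ_iff.mpr hl')⟩
  · rintro (⟨l, hlt, heq⟩ | ⟨rfl, hij⟩)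
    · refine ⟨l.succ, by simpa using hlt, Fin.cases (fun h => absurd h (Fin.not_lt_zero _)) ?_⟩
      exact fun l' hl' => by simpa using heq l' (Fin.succ_lt_succ_iff.mp hl')
    · exact ⟨0, by simpa using hij, Fin.cases (fun h => absurd h (lt_irrefl _)) (by simp)⟩

theorem coeffv_eq_eval_of_fin_zero (f : MvPolynomial (Fin 0) R) (β : Fin 0 → ℕ)
    (a : Fin 0 → R) : coeffv f β = eval a f := by
  rw [eq_C_of_isEmpty f, eval_C, coeffv, Subsingleton.elim (Finsupp.equivFunOnFinite.symm β) 0,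
    coeff_zero_C]

theorem coeffv_finSuccEquiv_coeff (f : MvPolynomial (Fin (n + 1)) R) (j : ℕ) (m : Fin n → ℕ) :
    coeffv ((finSuccEquiv R n f).coeff j) m = coeffv f (Fin.cons j m) := by
  rw [coeffv, coeffv, finSuccEquiv_coeff_coeff]
  congr

theorem eval_cons_eq_eval_eval_C (f : MvPolynomial (Fin (n + 1)) R) (c : R) (x : Fin n → R) :
    eval (Fin.cons c x) f = eval x ((finSuccEquiv R n f).eval (C c)) := by
  rw [eval_polynomial_eval_finSuccEquiv, eval_C]
  rfl

variable (R) in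
/-- For `φ = finSuccEquiv R n f` this is the polynomial `qₘ(X₁)` collecting the coefficients
of the monomials `X₁ʲ X'ᵐ` of `f`. -/
noncomputable def coeffColumn (m : Fin n → ℕ) : (MvPolynomial (Fin n) R)[X] →ₗ[R] R[X] :=
  Polynomial.lsum fun j =>
    (Polynomial.monomial j).comp (lcoeff R (Finsupp.equivFunOnFinite.symm m))

@[simp]
theorem coeff_coeffColumn (m : Fin n → ℕ) (φ : (MvPolynomial (Fin n) R)[X]) (j : ℕ) :
    (coeffColumn R m φ).coeff j = coeffv (φ.coeff j) m := by
  simp only [coeffColumn, Polynomial.lsum_apply, LinearMap.coe_comp, Function.comp_apply,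
    lcoeff_apply, Polynomial.sum_def, Polynomial.finsetSum_coeff, Polynomial.coeff_monomial,
    Finset.sum_ite_eq', Polynomial.mem_support_iff, ne_eq, coeffv, ite_eq_left_iff, not_not]
  intro h
  rw [h, coeff_zero]

theorem coeffColumn_C (m : Fin n → ℕ) (h : MvPolynomial (Fin n) R) :
    coeffColumn R m (Polynomial.C h) = Polynomial.C (coeffv h m) := by
  ext j
  rw [coeff_coeffColumn, Polynomial.coeff_C, Polynomial.coeff_C]
  split_ifs <;> simp [coeffv]

theorem coeffColumn_monomial (m : Fin n → ℕ) (j : ℕ) (h : MvPolynomial (Fin n) R) :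
    coeffColumn R m (Polynomial.monomial j h) = Polynomial.monomial j (coeffv h m) := by
  ext i
  rw [coeff_coeffColumn, Polynomial.coeff_monomial, Polynomial.coeff_monomial]
  split_ifs <;> simp [coeffv]

theorem coeffColumn_map_C_mul (m : Fin n → ℕ) (p : R[X]) (φ : (MvPolynomial (Fin n) R)[X]) :
    coeffColumn R m (p.map C * φ) = p * coeffColumn R m φ := by
  ext j
  simp only [coeff_coeffColumn, Polynomial.coeff_mul, Polynomial.coeff_map]
  simp [coeffv, coeff_sum]

theorem coeffv_eval_C (m : Fin n → ℕ) (φ : (MvPolynomial (Fin n) R)[X]) (c : R) :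
    coeffv (φ.eval (C c)) m = (coeffColumn R m φ).eval c := by
  induction φ using Polynomial.induction_on' with
  | add p q hp hq =>
    rw [Polynomial.eval_add, map_add, Polynomial.eval_add, ← hp, ← hq]
    exact coeff_add ..
  | monomial j h =>
    rw [coeffColumn_monomial, Polynomial.eval_monomial, Polynomial.eval_monomial, ← map_pow,
      mul_comm, coeffv, coeff_C_mul, mul_comm]
    rfl

theorem isLexLeadingExp_cons_iff {f : MvPolynomial (Fin (n + 1)) R} {b : ℕ} {t : Fin n → ℕ} :
    IsLexLeadingExp f (Fin.cons b t) ↔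
      (coeffColumn R t (finSuccEquiv R n f)).degree = b ∧
        ∀ m, coeffColumn R m (finSuccEquiv R n f) ≠ 0 → m ≠ t → lexLt m t := by
  have hcoeff : ∀ j m, (coeffColumn R m (finSuccEquiv R n f)).coeff j = coeffv f (Fin.cons j m) :=
    fun j m => by rw [coeff_coeffColumn, coeffv_finSuccEquiv_coeff]
  constructor
  · rintro ⟨hb, hlt⟩
    have key : ∀ j m, coeffv f (Fin.cons j m) ≠ 0 → lexLt m t ∨ m = t ∧ j ≤ b := by
      intro j m hjm
      by_cases heq : (Fin.cons j m : Fin (n + 1) → ℕ) = Fin.cons b t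
      · obtain ⟨rfl, rfl⟩ := Fin.cons_inj.mp heq
        exact .inr ⟨rfl, le_rfl⟩
      · exact (lexLt_cons_iff.mp (hlt _ hjm heq)).imp_right fun h => ⟨h.1, h.2.le⟩
    refine ⟨Polynomial.degree_eq_of_le_of_coeff_ne_zero ?_ (by rwa [hcoeff]), fun m hm hmt => ?_⟩
    · refine Polynomial.degree_le_iff_coeff_zero _ _ |>.mpr fun j hj => ?_
      by_contra hj0
      rcases key j t (by rwa [← hcoeff]) with h | ⟨-, h⟩
      · exact lexLt_irrefl t h
      · exact absurd hj (not_lt.mpr (WithBot.coe_le_coe.mpr h))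
    · obtain ⟨j, hj⟩ := Polynomial.ext_iff.not.mp hm |> not_forall.mp
      rw [Polynomial.coeff_zero, hcoeff] at hj
      exact (key j m hj).resolve_right fun h => hmt h.1
  · rintro ⟨hdeg, hlt⟩
    refine ⟨by rw [← hcoeff]; exact Polynomial.coeff_ne_zero_of_eq_degree hdeg, fun γ hγ hne => ?_⟩
    rw [← Fin.cons_self_tail γ, ← hcoeff] at hγ
    rw [← Fin.cons_self_tail γ] at hne ⊢
    by_cases hm : Fin.tail γ = t
    · subst hm
      have hle : γ 0 ≤ b := by
        have := Polynomial.le_degree_of_ne_zero hγ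
        rwa [hdeg, Nat.cast_le] at this
      exact lexLt_cons_iff.mpr (.inr ⟨rfl, hle.lt_of_ne fun h => hne (by rw [h])⟩)
    · exact lexLt_cons_iff.mpr (.inl (hlt _ (fun h => hγ (by rw [h, Polynomial.coeff_zero])) hm))

theorem isLexLeadingExp_eval_C {φ : (MvPolynomial (Fin n) R)[X]} {t : Fin n → ℕ} {c : R}
    (hlt : ∀ m, coeffColumn R m φ ≠ 0 → m ≠ t → lexLt m t)
    (hc : (coeffColumn R t φ).eval c ≠ 0) : IsLexLeadingExp (φ.eval (C c)) t :=
  ⟨by rwa [coeffv_eval_C], fun m hm hmt =>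
    hlt m (fun h => hm (by rw [coeffv_eval_C, h, Polynomial.eval_zero])) hmt⟩

end LeadingExponent

theorem exists_interpolation_of_isLexLeadingExp {K : Type*} [Field K] {n : ℕ} {T : Finset K}
    {g : K → MvPolynomial (Fin n) K} {t : Fin n → ℕ} (hg : ∀ c ∈ T, IsLexLeadingExp (g c) t) :
    ∃ F : (MvPolynomial (Fin n) K)[X], coeffColumn K t F = 1 ∧
      (∀ m, coeffColumn K m F ≠ 0 → m ≠ t → lexLt m t) ∧
      ∀ c ∈ T, F.eval (C c) = C (coeffv (g c) t)⁻¹ * g c := by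
  classical
  set M : MvPolynomial (Fin n) K := monomial (Finsupp.equivFunOnFinite.symm t) 1
  set u : K → MvPolynomial (Fin n) K := fun d => C (coeffv (g d) t)⁻¹ * g d
  have hM : ∀ m, coeffv M m = if m = t then 1 else 0 := fun m => by
    simp [M, coeffv, coeff_monomial, eq_comm]
  have hu : ∀ d m, coeffv (u d - M) m = (coeffv (g d) t)⁻¹ * coeffv (g d) m - coeffv M m :=
    fun d m => by simp [u, coeffv, coeff_C_mul]
  -- Interpolating `u d - M` rather than `u d` keeps the column at `t` equal to `1`,
  -- also when `T` is empty.
  set F := Polynomial.C M + ∑ d ∈ T, (Lagrange.basis T id d).map C * Polynomial.C (u d - M)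
  have hcol : ∀ m, coeffColumn K m F =
      Polynomial.C (coeffv M m) +
        ∑ d ∈ T, Lagrange.basis T id d * Polynomial.C (coeffv (u d - M) m) := fun m => by
    simp only [F, map_add, map_sum, coeffColumn_C, coeffColumn_map_C_mul]
  refine ⟨F, ?_, fun m hm hmt => ?_, fun c hc => ?_⟩
  · rw [hcol, hM, if_pos rfl, map_one, add_eq_left]
    refine Finset.sum_eq_zero fun d hd => ?_
    rw [hu, hM, if_pos rfl, inv_mul_cancel₀ (hg d hd).1, sub_self, map_zero, mul_zero]
  · rw [hcol, hM, if_neg hmt, map_zero, zero_add] at hm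
    obtain ⟨d, hd, hne⟩ := Finset.exists_ne_zero_of_sum_ne_zero hm
    rw [hu, hM, if_neg hmt, sub_zero] at hne
    exact (hg d hd).2 m (fun h => hne (by rw [h, mul_zero, map_zero, mul_zero])) hmt
  · simp only [F, Polynomial.eval_add, Polynomial.eval_C, Polynomial.eval_finsetSum,
      Polynomial.eval_mul, Polynomial.eval_map, Polynomial.eval₂_at_apply]
    rw [Finset.sum_eq_single_of_mem c hc fun d _ hdc => ?_]
    · rw [show Polynomial.eval c (Lagrange.basis T id c) = 1 from
        Lagrange.eval_basis_self (Set.injOn_id _) hc]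
      simp [u]
    · rw [show Polynomial.eval c (Lagrange.basis T id d) = 0 from
        Lagrange.eval_basis_of_ne (v := id) hdc hc]
      simp

section Slices

variable {α : Type*} [DecidableEq α] {n : ℕ}

/-- The paper's `H(c)`. -/
def slice (A : Finset (Fin (n + 1) → α)) (c : α) : Finset (Fin n → α) :=
  (A.filter fun a => a 0 = c).image Fin.tail

def firstCoordsWith (A : Finset (Fin (n + 1) → α)) (t : Fin n → ℕ) : Finset α :=
  (A.image fun a => a 0).filter fun c => t ∈ DofA n (slice A c)

theorem mem_DofA_zero_iff {A : Finset (Fin 0 → α)} {β : Fin 0 → ℕ} :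
    β ∈ DofA 0 A ↔ A.Nonempty := by
  simp only [DofA, Finset.mem_image]
  exact ⟨fun ⟨a, ha, _⟩ => ⟨a, ha⟩, fun ⟨a, ha⟩ => ⟨a, ha, Subsingleton.elim _ _⟩⟩

theorem cons_mem_DofA_succ_iff {A : Finset (Fin (n + 1) → α)} {b : ℕ} {t : Fin n → ℕ} :
    Fin.cons b t ∈ DofA (n + 1) A ↔ b < #(firstCoordsWith A t) := by
  rw [show DofA (n + 1) A = ((A.image fun a => a 0).biUnion fun c => DofA n (slice A c)).biUnion
      (fun s => (Finset.range #(firstCoordsWith A s)).image fun j => Fin.cons j s) from rfl]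
  simp only [Finset.mem_biUnion, Finset.mem_image, Finset.mem_range, Fin.cons_inj]
  constructor
  · rintro ⟨s, -, j, hj, rfl, rfl⟩
    exact hj
  · intro hb
    obtain ⟨c, hc⟩ := Finset.card_pos.mp (Nat.zero_lt_of_lt hb)
    obtain ⟨hcA, ht⟩ := Finset.mem_filter.mp hc
    exact ⟨t, ⟨c, Finset.mem_image.mp hcA, ht⟩, b, hb, rfl, rfl⟩

end Slices

section VanishingIdeal

variable {n : ℕ}

theorem cons_not_mem_DofA_of_vanishing {A : Finset (Fin (n + 1) → k)}
    {f : MvPolynomial (Fin (n + 1)) k} {b : ℕ} {t : Fin n → ℕ}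
    (ih : ∀ B : Finset (Fin n → k),
      (∃ g : MvPolynomial (Fin n) k, (∀ x ∈ B, eval x g = 0) ∧ IsLexLeadingExp g t) →
        t ∉ DofA n B)
    (hf : ∀ a ∈ A, eval a f = 0) (hlead : IsLexLeadingExp f (Fin.cons b t)) :
    Fin.cons b t ∉ DofA (n + 1) A := by
  obtain ⟨hdeg, hlt⟩ := isLexLeadingExp_cons_iff.mp hlead
  set q := coeffColumn k t (finSuccEquiv k n f)
  have hroots : ∀ c ∈ firstCoordsWith A t, q.eval c = 0 := by
    intro c hc
    by_contra hne
    refine ih _ ⟨_, fun x hx => ?_, isLexLeadingExp_eval_C hlt hne⟩ (Finset.mem_filter.mp hc).2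
    obtain ⟨a, haA, rfl⟩ := Finset.mem_image.mp hx
    obtain ⟨ha, rfl⟩ := Finset.mem_filter.mp haA
    rw [← eval_cons_eq_eval_eval_C, Fin.cons_self_tail]
    exact hf a ha
  have hq : q ≠ 0 := fun h => by simp [h] at hdeg
  rw [cons_mem_DofA_succ_iff, ← Polynomial.natDegree_eq_of_degree_eq_some hdeg]
  exact fun hcard => hq (Polynomial.eq_zero_of_natDegree_lt_card_of_eval_eq_zero' q _ hroots hcard)

theorem exists_vanishing_of_cons_not_mem_DofA {A : Finset (Fin (n + 1) → k)} {b : ℕ}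
    {t : Fin n → ℕ}
    (ih : ∀ B : Finset (Fin n → k), t ∉ DofA n B →
      ∃ g : MvPolynomial (Fin n) k, (∀ x ∈ B, eval x g = 0) ∧ IsLexLeadingExp g t)
    (h : Fin.cons b t ∉ DofA (n + 1) A) :
    ∃ f : MvPolynomial (Fin (n + 1)) k,
      (∀ a ∈ A, eval a f = 0) ∧ IsLexLeadingExp f (Fin.cons b t) := by
  rw [cons_mem_DofA_succ_iff, not_lt] at h
  set S := firstCoordsWith A t
  set T := A.image (fun a => a 0) \ S
  have hslice : ∀ c, ∃ g : MvPolynomial (Fin n) k, c ∈ T →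
      (∀ x ∈ slice A c, eval x g = 0) ∧ IsLexLeadingExp g t := by
    intro c
    by_cases hc : c ∈ T
    · obtain ⟨hcA, hcS⟩ := Finset.mem_sdiff.mp hc
      obtain ⟨g, hg⟩ := ih _ fun ht => hcS (Finset.mem_filter.mpr ⟨hcA, ht⟩)
      exact ⟨g, fun _ => hg⟩
    · exact ⟨0, fun h => absurd h hc⟩
  choose g hg using hslice
  obtain ⟨F, hFt, hFlt, hFeval⟩ :=
    exists_interpolation_of_isLexLeadingExp fun c hc => (hg c hc).2
  set V : k[X] := Lagrange.nodal S id * Polynomial.X ^ (b - #S)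
  have hVmonic : V.Monic := Lagrange.nodal_monic.mul (Polynomial.monic_X_pow _)
  have hVdeg : V.natDegree = b := by
    rw [Polynomial.Monic.natDegree_mul Lagrange.nodal_monic (Polynomial.monic_X_pow _),
      Lagrange.natDegree_nodal, Polynomial.natDegree_X_pow, Nat.add_sub_cancel' h]
  refine ⟨(finSuccEquiv k n).symm (V.map C * F), fun a ha => ?_, ?_⟩
  · rw [← Fin.cons_self_tail a, eval_cons_eq_eval_eval_C, AlgEquiv.apply_symm_apply,
      Polynomial.eval_mul, Polynomial.eval_map, Polynomial.eval₂_at_apply, map_mul, eval_C]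
    by_cases haS : a 0 ∈ S
    · have hV0 : (Lagrange.nodal S id).eval (a 0) = 0 :=
        Lagrange.eval_nodal_at_node (v := id) haS
      rw [Polynomial.eval_mul, hV0, zero_mul, zero_mul]
    · have haT : a 0 ∈ T := Finset.mem_sdiff.mpr ⟨Finset.mem_image_of_mem _ ha, haS⟩
      have hx : Fin.tail a ∈ slice A (a 0) :=
        Finset.mem_image_of_mem _ (Finset.mem_filter.mpr ⟨ha, rfl⟩)
      rw [hFeval _ haT, map_mul, (hg _ haT).1 _ hx, mul_zero, mul_zero]
  · simp only [isLexLeadingExp_cons_iff, AlgEquiv.apply_symm_apply, coeffColumn_map_C_mul, hFt,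
      mul_one]
    exact ⟨by rw [Polynomial.degree_eq_natDegree hVmonic.ne_zero, hVdeg],
      fun m hm hmt => hFlt m (right_ne_zero_of_mul hm) hmt⟩

theorem exists_vanishing_isLexLeadingExp_iff (n : ℕ) (A : Finset (Fin n → k)) (β : Fin n → ℕ) :
    (∃ f : MvPolynomial (Fin n) k, (∀ a ∈ A, eval a f = 0) ∧ IsLexLeadingExp f β) ↔
      β ∉ DofA n A := by
  induction n with
  | zero =>
    rw [mem_DofA_zero_iff]
    constructor
    · rintro ⟨f, hf, hβ, -⟩ ⟨a, ha⟩
      exact hβ (by rw [coeffv_eq_eval_of_fin_zero f β a, hf a ha])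
    · intro hA
      refine ⟨1, fun a ha => absurd ⟨a, ha⟩ hA, ?_,
        fun γ _ hγ => absurd (Subsingleton.elim γ β) hγ⟩
      rw [coeffv_eq_eval_of_fin_zero 1 β finZeroElim, map_one]
      exact one_ne_zero
  | succ n ih =>
    rw [← Fin.cons_self_tail β]
    exact ⟨fun ⟨f, hf, hlead⟩ =>
        cons_not_mem_DofA_of_vanishing (fun B hB => (ih B _).mp hB) hf hlead,
      exists_vanishing_of_cons_not_mem_DofA fun B hB => (ih B _).mpr hB⟩

end VanishingIdeal

/-- `β ∈ ℕ₀ⁿ` occurs as the lexicographic leading exponent (for `X₁ < … < Xₙ`) of some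
nonzero element of the vanishing ideal `I(A)` if and only if `β ∉ D(A)`. -/
theorem stmt_15 (n : ℕ) (A : Finset (Fin n → k)) (β : Fin n → ℕ) :
    (∃ f : MvPolynomial (Fin n) k, f ≠ 0 ∧ (∀ a ∈ A, MvPolynomial.eval a f = 0) ∧
        coeffv f β ≠ 0 ∧ ∀ γ : Fin n → ℕ, coeffv f γ ≠ 0 → γ ≠ β → lexLt γ β) ↔
      β ∉ DofA n A := by
  rw [← exists_vanishing_isLexLeadingExp_iff]
  constructor
  · rintro ⟨f, -, hf, hlead⟩
    exact ⟨f, hf, hlead⟩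
  · rintro ⟨f, hf, hβ, hlt⟩
    exact ⟨f, fun h => hβ (by simp [h, coeffv]), hf, hβ, hlt⟩
end
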